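/- Fix an integer n ≥ 4 and let π_R : ℝ^{2n−1} → ℝ^{n−1}×ℝ^{n−1} be as in the model, with critical set S₁ = {x_{n−1} = 0, x_n + y_{n−1} = 0}. Then at every point p = (x, y_{n−1}, θ'') ∈ S₁ with θ₁ ≠ 0: (i) S₁ is a smooth codimension-2 submanifold of ℝ^{2n−1}; (ii) the kernel of Dπ_R(p) is the 2-dimensional subspace spanned by the coordinate direction e_{x_{n−1}} and the vector y_{n−1}² e_{x₁} + e_{x_n}; (iii) ker Dπ_R(p) ∩ T_p S₁ = {0}; and (iv) the Hessian of the last component of π_R, namely of (x_{n−1}, x_n) ↦ −(2x_n y_{n−1} + x_n² − x_{n−1}²)θ₁, with respect to the variables (x_{n−1}, x_n) at p equals diag(2θ₁, −2θ₁), which is nondegenerate and sign-indefinite. Hence π_R is a hyperbolic submersion with folds along S₁. -/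

import Mathlib

open scoped Matrix
/-- The right projection `π_R` of the model folded cross cap canonical relation.
Points of `ℝ^{2n-1}` are written `(x, y_{n-1}, θ'')` with `x = (x₁, …, x_n)`
(indexed by `0, …, n-1`), `y_{n-1} ∈ ℝ` and `θ'' = (θ₁, …, θ_{n-2})`
(indexed by `0, …, n-3`). -/
noncomputable def piR (n : ℕ) (hn : 4 ≤ n)
    (p : (Fin n → ℝ) × ℝ × (Fin (n - 2) → ℝ)) :
    (Fin (n - 1) → ℝ) × (Fin (n - 1) → ℝ) :=
  ⟨fun i =>
      if (i : ℕ) = 0 then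
        p.1 ⟨0, by omega⟩ +
          ((p.1 ⟨n - 1, by omega⟩) ^ 2 - (p.1 ⟨n - 2, by omega⟩) ^ 2) * p.2.1 +
          p.1 ⟨n - 1, by omega⟩ * p.2.1 ^ 2
      else if (i : ℕ) = n - 2 then p.2.1
      else p.1 ⟨(i : ℕ), lt_of_lt_of_le i.isLt (Nat.sub_le n 1)⟩,
    fun i =>
      if h : (i : ℕ) = n - 2 then
        -(2 * p.1 ⟨n - 1, by omega⟩ * p.2.1 +
            (p.1 ⟨n - 1, by omega⟩) ^ 2 - (p.1 ⟨n - 2, by omega⟩) ^ 2) * p.2.2 ⟨0, by omega⟩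
      else p.2.2 ⟨(i : ℕ), by have := i.isLt; omega⟩⟩

noncomputable section CCAux

abbrev EE (n : ℕ) := (Fin n → ℝ) × ℝ × (Fin (n - 2) → ℝ)

def Xc (n : ℕ) (i : Fin n) : EE n →L[ℝ] ℝ :=
  (ContinuousLinearMap.proj i).comp (ContinuousLinearMap.fst ℝ (Fin n → ℝ) (ℝ × (Fin (n - 2) → ℝ)))

def Yc (n : ℕ) : EE n →L[ℝ] ℝ :=
  (ContinuousLinearMap.fst ℝ ℝ (Fin (n - 2) → ℝ)).comp
    (ContinuousLinearMap.snd ℝ (Fin n → ℝ) (ℝ × (Fin (n - 2) → ℝ)))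

def Tc (n : ℕ) (j : Fin (n - 2)) : EE n →L[ℝ] ℝ :=
  (ContinuousLinearMap.proj j).comp
    ((ContinuousLinearMap.snd ℝ ℝ (Fin (n - 2) → ℝ)).comp
      (ContinuousLinearMap.snd ℝ (Fin n → ℝ) (ℝ × (Fin (n - 2) → ℝ))))

@[simp] lemma Xc_apply (n : ℕ) (i : Fin n) (v : EE n) : Xc n i v = v.1 i := rfl
@[simp] lemma Yc_apply (n : ℕ) (v : EE n) : Yc n v = v.2.1 := rfl
@[simp] lemma Tc_apply (n : ℕ) (j : Fin (n - 2)) (v : EE n) : Tc n j v = v.2.2 j := rfl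

lemma hX (n : ℕ) (i : Fin n) (p : EE n) : HasFDerivAt (fun r : EE n => r.1 i) (Xc n i) p :=
  (Xc n i).hasFDerivAt

lemma hY (n : ℕ) (p : EE n) : HasFDerivAt (fun r : EE n => r.2.1) (Yc n) p :=
  (Yc n).hasFDerivAt

lemma hT (n : ℕ) (j : Fin (n - 2)) (p : EE n) :
    HasFDerivAt (fun r : EE n => r.2.2 j) (Tc n j) p :=
  (Tc n j).hasFDerivAt

lemma zero_lt_sub_two_of_four_le (n : ℕ) (hn : 4 ≤ n) : 0 < n - 2 := by omega

def Lmap (n : ℕ) (hn : 4 ≤ n) (y θ : ℝ) :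
    EE n →L[ℝ] (Fin (n - 1) → ℝ) × (Fin (n - 1) → ℝ) :=
  .prod
    (.pi fun i : Fin (n - 1) =>
      if (i : ℕ) = 0 then
        Xc n ⟨0, by omega⟩ - y ^ 2 • Xc n ⟨n - 1, by omega⟩ - y ^ 2 • Yc n
      else if (i : ℕ) = n - 2 then Yc n
      else Xc n ⟨(i : ℕ), lt_of_lt_of_le i.isLt (Nat.sub_le n 1)⟩)
    (.pi fun i : Fin (n - 1) =>
      if h : (i : ℕ) = n - 2 then (2 * y * θ) • Yc n + y ^ 2 • Tc n ⟨0, zero_lt_sub_two_of_four_le n hn⟩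
      else Tc n ⟨(i : ℕ), by have := i.isLt; omega⟩)

end CCAux

set_option maxHeartbeats 1000000 in
lemma piR_hasFDerivAt (n : ℕ) (hn : 4 ≤ n) (p : EE n)
    (hp1 : p.1 ⟨n - 2, by omega⟩ = 0) (hp2 : p.1 ⟨n - 1, by omega⟩ = -p.2.1) :
    HasFDerivAt (piR n hn) (Lmap n hn p.2.1 (p.2.2 ⟨0, zero_lt_sub_two_of_four_le n hn⟩)) p := by
  unfold piR Lmap
  apply HasFDerivAt.prodMk
  · rw [hasFDerivAt_pi]
    intro i
    by_cases h0 : (i : ℕ) = 0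
    · rw [if_pos h0]
      simp only [if_pos h0]
      simp only [pow_two]
      have h := ((hX n ⟨0, by omega⟩ p).add
          ((((hX n ⟨n - 1, by omega⟩ p).mul (hX n ⟨n - 1, by omega⟩ p)).sub
            ((hX n ⟨n - 2, by omega⟩ p).mul (hX n ⟨n - 2, by omega⟩ p))).mul
            (hY n p))).add ((hX n ⟨n - 1, by omega⟩ p).mul ((hY n p).mul (hY n p)))
      have hEq : (Xc n ⟨0, by omega⟩ - (p.2.1 * p.2.1) • Xc n ⟨n - 1, by omega⟩ -
          (p.2.1 * p.2.1) • Yc n) = (Xc n ⟨0, by omega⟩ +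
          ((p.1 ⟨n - 1, by omega⟩ * p.1 ⟨n - 1, by omega⟩ -
              p.1 ⟨n - 2, by omega⟩ * p.1 ⟨n - 2, by omega⟩) • Yc n +
            p.2.1 • (p.1 ⟨n - 1, by omega⟩ • Xc n ⟨n - 1, by omega⟩ +
                p.1 ⟨n - 1, by omega⟩ • Xc n ⟨n - 1, by omega⟩ -
              (p.1 ⟨n - 2, by omega⟩ • Xc n ⟨n - 2, by omega⟩ +
                p.1 ⟨n - 2, by omega⟩ • Xc n ⟨n - 2, by omega⟩))) +
          (p.1 ⟨n - 1, by omega⟩ • (p.2.1 • Yc n + p.2.1 • Yc n) +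
            (p.2.1 * p.2.1) • Xc n ⟨n - 1, by omega⟩)) := by
        refine ContinuousLinearMap.ext fun v => ?_
        simp [hp1, hp2]
        ring
      rw [hEq]
      exact h
    · by_cases h2 : (i : ℕ) = n - 2
      · rw [if_neg h0, if_pos h2]
        simp only [if_neg h0, if_pos h2]
        exact hY n p
      · rw [if_neg h0, if_neg h2]
        simp only [if_neg h0, if_neg h2]
        exact hX n _ p
  · rw [hasFDerivAt_pi]
    intro i
    by_cases h2 : (i : ℕ) = n - 2
    · rw [dif_pos h2]
      simp only [dif_pos h2]
      simp only [pow_two]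
      have h := (((((hX n ⟨n - 1, by omega⟩ p).const_mul 2).mul (hY n p)).add
            ((hX n ⟨n - 1, by omega⟩ p).mul (hX n ⟨n - 1, by omega⟩ p))).sub
            ((hX n ⟨n - 2, by omega⟩ p).mul (hX n ⟨n - 2, by omega⟩ p))).neg.mul
            (hT n ⟨0, by omega⟩ p)
      have hEq : ((2 * p.2.1 * p.2.2 ⟨0, by omega⟩) • Yc n +
          (p.2.1 * p.2.1) • Tc n ⟨0, by omega⟩) =
          (-(2 * p.1 ⟨n - 1, by omega⟩ * p.2.1 +
              p.1 ⟨n - 1, by omega⟩ * p.1 ⟨n - 1, by omega⟩ -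
              p.1 ⟨n - 2, by omega⟩ * p.1 ⟨n - 2, by omega⟩) • Tc n ⟨0, by omega⟩ +
            p.2.2 ⟨0, by omega⟩ •
              -((2 * p.1 ⟨n - 1, by omega⟩) • Yc n + p.2.1 • (2 : ℝ) • Xc n ⟨n - 1, by omega⟩ +
                  (p.1 ⟨n - 1, by omega⟩ • Xc n ⟨n - 1, by omega⟩ +
                    p.1 ⟨n - 1, by omega⟩ • Xc n ⟨n - 1, by omega⟩) -
                (p.1 ⟨n - 2, by omega⟩ • Xc n ⟨n - 2, by omega⟩ +
                  p.1 ⟨n - 2, by omega⟩ • Xc n ⟨n - 2, by omega⟩))) := by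
        refine ContinuousLinearMap.ext fun v => ?_
        simp [hp1, hp2]
        ring
      rw [hEq]
      exact h
    · rw [dif_neg h2]
      simp only [dif_neg h2]
      exact hT n _ p


lemma Lmap_ker_facts (n : ℕ) (hn : 4 ≤ n) (y θ : ℝ) (v : EE n)
    (hv : Lmap n hn y θ v = 0) :
    v.1 ⟨0, by omega⟩ - y ^ 2 * v.1 ⟨n - 1, by omega⟩ - y ^ 2 * v.2.1 = 0 ∧
    v.2.1 = 0 ∧
    (∀ k, 0 < k → k < n - 2 → ∀ (h : k < n), v.1 ⟨k, h⟩ = 0) ∧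
    (∀ j : Fin (n - 2), v.2.2 j = 0) := by
  have hfst := congrArg Prod.fst hv
  have hsnd := congrArg Prod.snd hv
  have e0 := congrFun hfst (⟨0, by omega⟩ : Fin (n - 1))
  have e2 := congrFun hfst (⟨n - 2, by omega⟩ : Fin (n - 1))
  simp [Lmap] at e0 e2
  rw [if_neg (by omega : ¬ n - 2 = 0)] at e2
  refine ⟨e0, e2, ?_, ?_⟩
  · intro k hk0 hk2 h
    have ek := congrFun hfst (⟨k, by omega⟩ : Fin (n - 1))
    simp [Lmap] at ek
    rw [if_neg (by omega : ¬ k = 0), if_neg (by omega : ¬ k = n - 2)] at ek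
    simpa using ek
  · intro j
    have ej := congrFun hsnd (⟨(j : ℕ), by omega⟩ : Fin (n - 1))
    simp [Lmap] at ej
    rw [if_neg (by have := j.isLt; omega : ¬ (j : ℕ) = n - 2)] at ej
    simpa using ej

set_option maxHeartbeats 1000000 in
/-- at every point `p ∈ S₁ = {x_{n-1} = 0, x_n + y_{n-1} = 0}` with
`θ₁ ≠ 0`:
(i) `S₁` is a smooth codimension-2 submanifold (expressed as: the defining map
`q ↦ (x_{n-1}, x_n + y_{n-1})` is a submersion at every point, so its zero set `S₁` is a
regular level set of codimension 2);
(ii) `ker Dπ_R(p)` is spanned by `e_{x_{n-1}}` and `y_{n-1}² e_{x₁} + e_{x_n}`;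
(iii) `ker Dπ_R(p) ∩ T_p S₁ = 0`, where `T_p S₁` is the kernel of the derivative of the
defining map, i.e. `{v : v_{x_{n-1}} = 0, v_{x_n} + v_{y_{n-1}} = 0}`;
(iv) the Hessian of the last component `(x_{n-1}, x_n) ↦ -(2 x_n y_{n-1} + x_n² - x_{n-1}²)θ₁`
in the variables `(x_{n-1}, x_n)` equals `diag(2θ₁, -2θ₁)`, which is nondegenerate and
sign-indefinite.  Hence `π_R` is a hyperbolic submersion with folds along `S₁`. -/
theorem stmt_5 (n : ℕ) (hn : 4 ≤ n)
    (p : (Fin n → ℝ) × ℝ × (Fin (n - 2) → ℝ))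
    (hθ : p.2.2 ⟨0, by omega⟩ ≠ 0)
    (hp : p.1 ⟨n - 2, by omega⟩ = 0 ∧ p.1 ⟨n - 1, by omega⟩ + p.2.1 = 0) :
    -- (i)
    (∀ q : (Fin n → ℝ) × ℝ × (Fin (n - 2) → ℝ),
      Function.Surjective
        (fderiv ℝ
          (fun r : (Fin n → ℝ) × ℝ × (Fin (n - 2) → ℝ) =>
            ((r.1 ⟨n - 2, by omega⟩, r.1 ⟨n - 1, by omega⟩ + r.2.1) : ℝ × ℝ)) q)) ∧
    -- (ii)
    LinearMap.ker (fderiv ℝ (piR n hn) p :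
        (Fin n → ℝ) × ℝ × (Fin (n - 2) → ℝ) →ₗ[ℝ] (Fin (n - 1) → ℝ) × (Fin (n - 1) → ℝ)) =
      Submodule.span ℝ
        {((Pi.single (⟨n - 2, by omega⟩ : Fin n) 1, 0, 0) :
            (Fin n → ℝ) × ℝ × (Fin (n - 2) → ℝ)),
         ((Pi.single (⟨0, by omega⟩ : Fin n) (p.2.1 ^ 2) +
             Pi.single (⟨n - 1, by omega⟩ : Fin n) 1, 0, 0) :
            (Fin n → ℝ) × ℝ × (Fin (n - 2) → ℝ))} ∧
    -- (iii)
    (∀ v : (Fin n → ℝ) × ℝ × (Fin (n - 2) → ℝ),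
      v ∈ LinearMap.ker ((fderiv ℝ (piR n hn) p :
        (Fin n → ℝ) × ℝ × (Fin (n - 2) → ℝ) →ₗ[ℝ] (Fin (n - 1) → ℝ) × (Fin (n - 1) → ℝ))) →
      v.1 ⟨n - 2, by omega⟩ = 0 → v.1 ⟨n - 1, by omega⟩ + v.2.1 = 0 → v = 0) ∧
    -- (iv)
    (let Θ : ℝ := p.2.2 ⟨0, by omega⟩
     let Y : ℝ := p.2.1
     let g : ℝ × ℝ → ℝ := fun q => -(2 * q.2 * Y + q.2 ^ 2 - q.1 ^ 2) * Θ
     let q₀ : ℝ × ℝ := (p.1 ⟨n - 2, by omega⟩, p.1 ⟨n - 1, by omega⟩)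
     let H : Matrix (Fin 2) (Fin 2) ℝ :=
       !![fderiv ℝ (fun q => fderiv ℝ g q (1, 0)) q₀ (1, 0),
          fderiv ℝ (fun q => fderiv ℝ g q (1, 0)) q₀ (0, 1);
          fderiv ℝ (fun q => fderiv ℝ g q (0, 1)) q₀ (1, 0),
          fderiv ℝ (fun q => fderiv ℝ g q (0, 1)) q₀ (0, 1)]
     H = !![2 * Θ, 0; 0, -2 * Θ] ∧ H.det ≠ 0 ∧
       (∃ u : Fin 2 → ℝ, 0 < u ⬝ᵥ H.mulVec u) ∧
       (∃ v : Fin 2 → ℝ, v ⬝ᵥ H.mulVec v < 0)) := by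
  have hx2 : p.1 ⟨n - 2, by omega⟩ = 0 := hp.1
  have hx1 : p.1 ⟨n - 1, by omega⟩ = -p.2.1 := by linarith [hp.2]
  have hD := piR_hasFDerivAt n hn p hx2 hx1
  have hfd : fderiv ℝ (piR n hn) p = Lmap n hn p.2.1 (p.2.2 ⟨0, by omega⟩) := hD.fderiv
  refine ⟨?_, ?_, ?_, ?_⟩
  -- (i)
  · intro q
    have hM : (fun r : (Fin n → ℝ) × ℝ × (Fin (n - 2) → ℝ) =>
        ((r.1 ⟨n - 2, by omega⟩, r.1 ⟨n - 1, by omega⟩ + r.2.1) : ℝ × ℝ)) =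
        ⇑((Xc n ⟨n - 2, by omega⟩).prod (Xc n ⟨n - 1, by omega⟩ + Yc n)) := rfl
    rw [hM, ContinuousLinearMap.fderiv]
    rintro ⟨a, b⟩
    refine ⟨⟨fun j => if (j : ℕ) = n - 2 then a else b, 0, 0⟩, ?_⟩
    have h1 : ¬ (n - 1) = n - 2 := by omega
    simp [ContinuousLinearMap.prod_apply, if_pos rfl, if_neg h1]
  -- (ii)
  · rw [hfd]
    apply le_antisymm
    · intro v hv
      obtain ⟨f0, f1, f2, f3⟩ :=
        Lmap_ker_facts n hn p.2.1 (p.2.2 ⟨0, by omega⟩) v (LinearMap.mem_ker.mp hv)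
      have hv0 : v.1 ⟨0, by omega⟩ = p.2.1 ^ 2 * v.1 ⟨n - 1, by omega⟩ := by
        rw [f1] at f0; linarith
      rw [Submodule.mem_span_pair]
      refine ⟨v.1 ⟨n - 2, by omega⟩, v.1 ⟨n - 1, by omega⟩, ?_⟩
      refine Prod.ext ?_ (Prod.ext ?_ ?_)
      · funext i
        simp only [Prod.fst_add, Prod.smul_fst, Pi.add_apply, Pi.smul_apply, smul_eq_mul]
        rcases Nat.lt_or_ge (i : ℕ) 1 with h | h
        · rw [show i = (⟨0, by omega⟩ : Fin n) from Fin.ext (by simp; omega)]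
          simp [Pi.single_apply, Fin.ext_iff, (show ¬(0 : ℕ) = n - 2 by omega),
            (show ¬(0 : ℕ) = n - 1 by omega), hv0]
          ring
        · rcases Nat.lt_or_ge (i : ℕ) (n - 2) with h' | h'
          · simp [Pi.single_apply, Fin.ext_iff, (show ¬(i : ℕ) = n - 2 by omega),
              (show ¬(i : ℕ) = n - 1 by omega), (show ¬(i : ℕ) = 0 by omega)]
            exact (f2 (i : ℕ) (by omega) h' i.isLt).symm
          · rcases Nat.lt_or_ge (i : ℕ) (n - 1) with h'' | h''
            · rw [show i = (⟨n - 2, by omega⟩ : Fin n) from Fin.ext (by simp; omega)]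
              simp [Pi.single_apply, Fin.ext_iff, (show ¬(n - 2 : ℕ) = 0 by omega),
                (show ¬(n - 2 : ℕ) = n - 1 by omega)]
            · rw [show i = (⟨n - 1, by omega⟩ : Fin n) from
                Fin.ext (by simp; have := i.isLt; omega)]
              simp [Pi.single_apply, Fin.ext_iff, (show ¬(n - 1 : ℕ) = 0 by omega),
                (show ¬(n - 1 : ℕ) = n - 2 by omega)]
      · simp [f1]
      · funext j
        simp [f3 j]
    · rw [Submodule.span_le]
      rintro z hz
      simp only [Set.mem_insert_iff, Set.mem_singleton_iff] at hz
      have goal1 : ∀ w : EE n, Lmap n hn p.2.1 (p.2.2 ⟨0, by omega⟩) w = 0 →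
          w ∈ (LinearMap.ker (Lmap n hn p.2.1 (p.2.2 ⟨0, by omega⟩) :
            EE n →ₗ[ℝ] (Fin (n - 1) → ℝ) × (Fin (n - 1) → ℝ)) : Set (EE n)) := by
        intro w hw
        simpa [LinearMap.mem_ker] using hw
      rcases hz with rfl | rfl
      · apply goal1
        refine Prod.ext (funext fun i => ?_) (funext fun i => ?_)
        · simp only [Lmap, ContinuousLinearMap.prod_apply, ContinuousLinearMap.pi_apply]
          split_ifs with hi0 hi2
          · simp [Pi.single_apply, Fin.ext_iff, (show ¬(0 : ℕ) = n - 2 by omega),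
              (show ¬(n - 1 : ℕ) = n - 2 by omega)]
          · simp
          · simp [Pi.single_apply, Fin.ext_iff, hi2]
        · simp only [Lmap, ContinuousLinearMap.prod_apply, ContinuousLinearMap.pi_apply]
          split_ifs with hi2 <;> simp
      · apply goal1
        refine Prod.ext (funext fun i => ?_) (funext fun i => ?_)
        · simp only [Lmap, ContinuousLinearMap.prod_apply, ContinuousLinearMap.pi_apply]
          split_ifs with hi0 hi2
          · simp [Pi.single_apply, Fin.ext_iff, (show ¬(0 : ℕ) = n - 1 by omega),
              (show ¬(n - 1 : ℕ) = 0 by omega), (show ¬(n - 2 : ℕ) = 0 by omega),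
              (show ¬(n - 2 : ℕ) = n - 1 by omega)]
          · simp
          · simp [Pi.single_apply, Fin.ext_iff, hi0,
              (show ¬(i : ℕ) = n - 1 by have := i.isLt; omega)]
        · simp only [Lmap, ContinuousLinearMap.prod_apply, ContinuousLinearMap.pi_apply]
          split_ifs with hi2 <;> simp
  -- (iii)
  · intro v hv h1 h2
    rw [hfd] at hv
    obtain ⟨f0, f1, f2, f3⟩ :=
      Lmap_ker_facts n hn p.2.1 (p.2.2 ⟨0, by omega⟩) v (LinearMap.mem_ker.mp hv)
    have hvn1 : v.1 ⟨n - 1, by omega⟩ = 0 := by rw [f1] at h2; linarith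
    have hv0 : v.1 ⟨0, by omega⟩ = 0 := by rw [f1, hvn1] at f0; linarith
    refine Prod.ext ?_ (Prod.ext ?_ ?_)
    · funext i
      rcases Nat.lt_or_ge (i : ℕ) 1 with h | h
      · have : i = (⟨0, by omega⟩ : Fin n) := Fin.ext (by simp; omega)
        rw [this]; simpa using hv0
      · rcases Nat.lt_or_ge (i : ℕ) (n - 2) with h' | h'
        · simpa using f2 (i : ℕ) (by omega) h' i.isLt
        · rcases Nat.lt_or_ge (i : ℕ) (n - 1) with h'' | h''
          · have : i = (⟨n - 2, by omega⟩ : Fin n) := Fin.ext (by simp; omega)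
            rw [this]; simpa using h1
          · have : i = (⟨n - 1, by omega⟩ : Fin n) := Fin.ext (by simp; have := i.isLt; omega)
            rw [this]; simpa using hvn1
    · simpa using f1
    · funext j; simpa using f3 j
  -- (iv)
  · intro Θ Y g q₀ H
    have hΘ : Θ ≠ 0 := hθ
    have hgeq : g = fun q : ℝ × ℝ => -(2 * q.2 * Y + q.2 * q.2 - q.1 * q.1) * Θ := by
      funext q
      show -(2 * q.2 * Y + q.2 ^ 2 - q.1 ^ 2) * Θ = _
      ring
    have hg : ∀ q : ℝ × ℝ, fderiv ℝ g q =
        (2 * Θ * q.1) • ContinuousLinearMap.fst ℝ ℝ ℝ +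
          (-(2 * Y + 2 * q.2) * Θ) • ContinuousLinearMap.snd ℝ ℝ ℝ := by
      intro q
      rw [hgeq]
      have h := (((((hasFDerivAt_snd (𝕜 := ℝ) (E := ℝ) (F := ℝ) (p := q)).const_mul
            (2 : ℝ)).mul_const Y).add
            ((hasFDerivAt_snd (𝕜 := ℝ) (E := ℝ) (F := ℝ) (p := q)).mul
              (hasFDerivAt_snd (𝕜 := ℝ) (E := ℝ) (F := ℝ) (p := q)))).sub
            ((hasFDerivAt_fst (𝕜 := ℝ) (E := ℝ) (F := ℝ) (p := q)).mul
              (hasFDerivAt_fst (𝕜 := ℝ) (E := ℝ) (F := ℝ) (p := q)))).neg.mul_const Θ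
      rw [HasFDerivAt.fderiv (f := fun q : ℝ × ℝ => -(2 * q.2 * Y + q.2 * q.2 - q.1 * q.1) * Θ) h]
      refine ContinuousLinearMap.ext fun w => ?_
      simp
      ring
    have e1 : (fun q : ℝ × ℝ => fderiv ℝ g q ((1 : ℝ), (0 : ℝ))) =
        fun q : ℝ × ℝ => 2 * Θ * q.1 := by
      funext q; rw [hg q]; simp
    have e2 : (fun q : ℝ × ℝ => fderiv ℝ g q ((0 : ℝ), (1 : ℝ))) =
        fun q : ℝ × ℝ => -(2 * Y + 2 * q.2) * Θ := by
      funext q; rw [hg q]; simp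
    have k1 : HasFDerivAt (fun q : ℝ × ℝ => 2 * Θ * q.1)
        ((2 * Θ) • ContinuousLinearMap.fst ℝ ℝ ℝ) q₀ := by
      exact (hasFDerivAt_fst (𝕜 := ℝ) (E := ℝ) (F := ℝ) (p := q₀)).const_mul (2 * Θ)
    have k2 : HasFDerivAt (fun q : ℝ × ℝ => -(2 * Y + 2 * q.2) * Θ)
        ((-2 * Θ) • ContinuousLinearMap.snd ℝ ℝ ℝ) q₀ := by
      have h := (((hasFDerivAt_snd (𝕜 := ℝ) (E := ℝ) (F := ℝ) (p := q₀)).const_mul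
          (2 : ℝ)).const_add (2 * Y)).neg.mul_const Θ
      have hEq : (Θ • -((2 : ℝ) • ContinuousLinearMap.snd ℝ ℝ ℝ)) =
          ((-2 * Θ) • ContinuousLinearMap.snd ℝ ℝ ℝ) := by
        refine ContinuousLinearMap.ext fun w => ?_
        simp
        ring
      rw [hEq] at h
      exact h
    have hH : H = !![2 * Θ, 0; 0, -2 * Θ] := by
      show !![fderiv ℝ (fun q => fderiv ℝ g q (1, 0)) q₀ (1, 0),
          fderiv ℝ (fun q => fderiv ℝ g q (1, 0)) q₀ (0, 1);
          fderiv ℝ (fun q => fderiv ℝ g q (0, 1)) q₀ (1, 0),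
          fderiv ℝ (fun q => fderiv ℝ g q (0, 1)) q₀ (0, 1)] = _
      rw [e1, e2, k1.fderiv, k2.fderiv]
      ext i j
      fin_cases i <;> fin_cases j <;> simp
    refine ⟨hH, ?_, ?_, ?_⟩
    · rw [hH, Matrix.det_fin_two_of]
      intro hcon
      rcases hΘ.lt_or_gt with h | h <;> nlinarith
    · rcases hΘ.lt_or_gt with h | h
      · refine ⟨![0, 1], ?_⟩
        simp [hH, Matrix.mulVec, dotProduct, Fin.sum_univ_two]
        linarith
      · refine ⟨![1, 0], ?_⟩
        simp [hH, Matrix.mulVec, dotProduct, Fin.sum_univ_two]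
        linarith
    · rcases hΘ.lt_or_gt with h | h
      · refine ⟨![1, 0], ?_⟩
        simp [hH, Matrix.mulVec, dotProduct, Fin.sum_univ_two]
        linarith
      · refine ⟨![0, 1], ?_⟩
        simp [hH, Matrix.mulVec, dotProduct, Fin.sum_univ_two]
        linarith
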